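/- Let G be a graph of register-logic form with respect to output set O, and let u ∈ O. Local complementation at u yields a graph of register-logic form with respect to O if and only if u has at most one neighbor in V \ O. -/

import Mathlib

/-- Register-logic form: no edges between non-output vertices. -/
def RLForm {V : Type*} (G : SimpleGraph V) (O : Finset V) [DecidableEq V] : Prop :=
  ∀ v w : V, G.Adj v w → v ∈ O ∨ w ∈ O

/-- Local complementation at a vertex `u`: toggle every edge between two
distinct neighbors of `u`, leaving all other adjacencies unchanged. -/
def localComp {V : Type*} (G : SimpleGraph V) (u : V) : SimpleGraph V where
  Adj v w := v ≠ w ∧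
    ((G.Adj u v ∧ G.Adj u w ∧ ¬ G.Adj v w) ∨ (¬ (G.Adj u v ∧ G.Adj u w) ∧ G.Adj v w))
  symm := by
    constructor
    intro v w ⟨hne, h⟩
    refine ⟨hne.symm, ?_⟩
    rw [G.adj_comm w v]
    tauto
  loopless := ⟨fun v h => h.1 rfl⟩

/-! Local complementation at `u` creates an edge between non-output vertices exactly when
they are two distinct neighbours of `u`, since `G` has no such edge to remove. -/

section

variable {V : Type*} {G : SimpleGraph V} {u v w : V}

theorem localComp_adj_of_not_adj (h : ¬ G.Adj v w) :
    (localComp G u).Adj v w ↔ v ≠ w ∧ G.Adj u v ∧ G.Adj u w := by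
  simp only [localComp, h, not_false_eq_true, and_true, and_false, or_false]

theorem not_adj_of_rlForm [DecidableEq V] {O : Finset V} (hRL : RLForm G O)
    (hv : v ∉ O) (hw : w ∉ O) : ¬ G.Adj v w :=
  fun hvw => (hRL v w hvw).elim hv hw

theorem rlForm_localComp_iff [DecidableEq V] {O : Finset V} (hRL : RLForm G O) :
    RLForm (localComp G u) O ↔
      ∀ v ∉ O, ∀ w ∉ O, G.Adj u v → G.Adj u w → v = w := by
  constructor
  · intro h v hv w hw huv huw
    by_contra hne
    have hadj : (localComp G u).Adj v w :=
      (localComp_adj_of_not_adj (not_adj_of_rlForm hRL hv hw)).2 ⟨hne, huv, huw⟩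
    exact (h v w hadj).elim hv hw
  · intro h v w hadj
    by_contra! hout
    obtain ⟨hne, huv, huw⟩ :=
      (localComp_adj_of_not_adj (not_adj_of_rlForm hRL hout.1 hout.2)).1 hadj
    exact hne (h v hout.1 w hout.2 huv huw)

end

theorem localComp_output_RL_iff_general {V : Type*} [Fintype V] [DecidableEq V]
    (G : SimpleGraph V) [DecidableRel G.Adj] (O : Finset V) (hRL : RLForm G O)
    (u : V) :
    RLForm (localComp G u) O ↔
      ((G.neighborFinset u).filter (fun v => v ∉ O)).card ≤ 1 := by
  rw [rlForm_localComp_iff hRL, Finset.card_le_one]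
  simp only [Finset.mem_filter, SimpleGraph.mem_neighborFinset]
  exact ⟨fun h v hv w hw => h v hv.2 w hw.2 hv.1 hw.1,
    fun h v hv w hw huv huw => h v ⟨huv, hv⟩ w ⟨huw, hw⟩⟩

theorem localComp_output_RL_iff {V : Type*} [Fintype V] [DecidableEq V]
    (G : SimpleGraph V) [DecidableRel G.Adj] (O : Finset V) (hRL : RLForm G O)
    (u : V) (hu : u ∈ O) :
    RLForm (localComp G u) O ↔
      ((G.neighborFinset u).filter (fun v => v ∉ O)).card ≤ 1 :=
  localComp_output_RL_iff_general G O hRL u
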